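/- Finite convergence of MDC-ADMM (first part of Theorem 2.1): for any MDC-ADMM value sequence (μ^(m), θ^(m))_{m≥0}, the objective values converge in a finite number of steps; that is, there exists m* < ∞ such that S(μ^(m), θ^(m)) = S(μ^(m*), θ^(m*)) for all m ≥ m*. -/
import Mathlib


open Finset

/-- The ℓ₁ norm of a vector in ℝ^p. -/
noncomputable def l1norm {p : ℕ} (v : EuclideanSpace ℝ (Fin p)) : ℝ := ∑ k, |v k|

/-- Index set P = {(i,j) : 1 ≤ i < j ≤ n}. -/
abbrev PairIdx (n : ℕ) := {q : Fin n × Fin n // q.1 < q.2}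

/-- The SPRclust objective
`S(μ,θ) = (1/2)∑‖x_i−μ_i‖² + λ₁∑‖μ_i‖₁ + λ₂∑ min(‖θ_{ij}‖₂, τ)`. -/
noncomputable def Sobj (n p : ℕ) (x : Fin n → EuclideanSpace ℝ (Fin p))
    (lam1 lam2 tau : ℝ) (μ : Fin n → EuclideanSpace ℝ (Fin p))
    (θ : PairIdx n → EuclideanSpace ℝ (Fin p)) : ℝ :=
  ((1 : ℝ)/2) * ∑ i, ‖x i - μ i‖^2 + lam1 * ∑ i, l1norm (μ i)
    + lam2 * ∑ e : PairIdx n, min ‖θ e‖ tau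

/-- `S₁(μ,θ) = (1/2)∑‖x_i−μ_i‖² + λ₁∑‖μ_i‖₁ + λ₂∑‖θ_{ij}‖₂`. -/
noncomputable def S1 (n p : ℕ) (x : Fin n → EuclideanSpace ℝ (Fin p))
    (lam1 lam2 : ℝ) (μ : Fin n → EuclideanSpace ℝ (Fin p))
    (θ : PairIdx n → EuclideanSpace ℝ (Fin p)) : ℝ :=
  ((1 : ℝ)/2) * ∑ i, ‖x i - μ i‖^2 + lam1 * ∑ i, l1norm (μ i)
    + lam2 * ∑ e : PairIdx n, ‖θ e‖

/-- `S₂(θ) = λ₂ ∑ (‖θ_{ij}‖₂ − τ)₊`. -/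
noncomputable def S2 (n p : ℕ) (lam2 tau : ℝ)
    (θ : PairIdx n → EuclideanSpace ℝ (Fin p)) : ℝ :=
  lam2 * ∑ e : PairIdx n, max (‖θ e‖ - tau) 0

/-- The surrogate
`S_B(μ,θ) = (1/2)∑‖x_i−μ_i‖² + λ₁∑‖μ_i‖₁ + λ₂∑_{(i,j)∈P∖B}‖θ_{ij}‖₂ + λ₂τ|B|`. -/
noncomputable def SB (n p : ℕ) (x : Fin n → EuclideanSpace ℝ (Fin p))
    (lam1 lam2 tau : ℝ) (B : Finset (PairIdx n))
    (μ : Fin n → EuclideanSpace ℝ (Fin p))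
    (θ : PairIdx n → EuclideanSpace ℝ (Fin p)) : ℝ :=
  ((1 : ℝ)/2) * ∑ i, ‖x i - μ i‖^2 + lam1 * ∑ i, l1norm (μ i)
    + lam2 * ∑ e ∈ Bᶜ, ‖θ e‖ + lam2 * tau * B.card

/-- The active set `B(θ̂) = {(i,j) ∈ P : ‖θ̂_{ij}‖₂ ≥ τ}`. -/
noncomputable def activeSet (n p : ℕ) (tau : ℝ)
    (θhat : PairIdx n → EuclideanSpace ℝ (Fin p)) : Finset (PairIdx n) :=
  Finset.univ.filter (fun e => ‖θhat e‖ ≥ tau)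

/-- The feasible set `C = {(μ,θ) : θ_{ij} = μ_i − μ_j for all (i,j) ∈ P}`. -/
def Feas (n p : ℕ) :
    Set ((Fin n → EuclideanSpace ℝ (Fin p)) × (PairIdx n → EuclideanSpace ℝ (Fin p))) :=
  {z | ∀ e : PairIdx n, z.2 e = z.1 e.val.1 - z.1 e.val.2}

lemma Sobj_le_SB (n p : ℕ) (x : Fin n → EuclideanSpace ℝ (Fin p))
    (lam1 lam2 tau : ℝ) (hlam2 : 0 ≤ lam2) (htau : 0 ≤ tau)
    (B : Finset (PairIdx n)) (μ : Fin n → EuclideanSpace ℝ (Fin p))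
    (θ : PairIdx n → EuclideanSpace ℝ (Fin p)) :
    Sobj n p x lam1 lam2 tau μ θ ≤ SB n p x lam1 lam2 tau B μ θ := by
  unfold Sobj SB
  have hsplit : ∑ e : PairIdx n, min ‖θ e‖ tau
      = ∑ e ∈ Bᶜ, min ‖θ e‖ tau + ∑ e ∈ B, min ‖θ e‖ tau :=
    (Finset.sum_compl_add_sum B _).symm
  have h1 : ∑ e ∈ Bᶜ, min ‖θ e‖ tau ≤ ∑ e ∈ Bᶜ, ‖θ e‖ :=
    Finset.sum_le_sum fun e _ => min_le_left _ _
  have h2 : ∑ e ∈ B, min ‖θ e‖ tau ≤ ∑ e ∈ B, tau :=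
    Finset.sum_le_sum fun e _ => min_le_right _ _
  have h3 : ∑ e ∈ B, (tau : ℝ) = tau * B.card := by
    rw [Finset.sum_const, nsmul_eq_mul, mul_comm]
  have := mul_le_mul_of_nonneg_left
    (by rw [hsplit]; linarith : ∑ e : PairIdx n, min ‖θ e‖ tau
      ≤ ∑ e ∈ Bᶜ, ‖θ e‖ + tau * B.card) hlam2
  nlinarith [this]

lemma Sobj_eq_SB_active (n p : ℕ) (x : Fin n → EuclideanSpace ℝ (Fin p))
    (lam1 lam2 tau : ℝ) (μ : Fin n → EuclideanSpace ℝ (Fin p))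
    (θ : PairIdx n → EuclideanSpace ℝ (Fin p)) :
    Sobj n p x lam1 lam2 tau μ θ
      = SB n p x lam1 lam2 tau (activeSet n p tau θ) μ θ := by
  unfold Sobj SB
  set B := activeSet n p tau θ with hB
  have hmem : ∀ e : PairIdx n, e ∈ B ↔ tau ≤ ‖θ e‖ := by
    intro e; simp [hB, activeSet, ge_iff_le]
  have hsplit : ∑ e : PairIdx n, min ‖θ e‖ tau
      = ∑ e ∈ Bᶜ, min ‖θ e‖ tau + ∑ e ∈ B, min ‖θ e‖ tau :=
    (Finset.sum_compl_add_sum B _).symm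
  have h1 : ∑ e ∈ Bᶜ, min ‖θ e‖ tau = ∑ e ∈ Bᶜ, ‖θ e‖ := by
    refine Finset.sum_congr rfl fun e he => ?_
    have : ¬ tau ≤ ‖θ e‖ := by
      intro h; exact (Finset.mem_compl.mp he) ((hmem e).mpr h)
    exact min_eq_left (le_of_not_ge this)
  have h2 : ∑ e ∈ B, min ‖θ e‖ tau = tau * B.card := by
    rw [Finset.sum_congr rfl fun e he => min_eq_right ((hmem e).mp he),
      Finset.sum_const, nsmul_eq_mul, mul_comm]
  rw [hsplit, h1, h2]; ring

/-- finite convergence of MDC-ADMM, first part of Theorem 2.1: along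
any MDC-ADMM value sequence, there exists m* < ∞ such that
S(μ^(m), θ^(m)) = S(μ^(m*), θ^(m*)) for all m ≥ m*. -/
theorem mdc_admm_finite_convergence (n p : ℕ) (hn : 1 ≤ n) (hp : 1 ≤ p)
    (x : Fin n → EuclideanSpace ℝ (Fin p)) (lam1 lam2 tau : ℝ)
    (hlam1 : 0 ≤ lam1) (hlam2 : 0 ≤ lam2) (htau : 0 < tau)
    (seq : ℕ → (Fin n → EuclideanSpace ℝ (Fin p)) × (PairIdx n → EuclideanSpace ℝ (Fin p)))
    (hfeas : ∀ m, seq m ∈ Feas n p)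
    (hmin : ∀ m, ∀ z ∈ Feas n p,
      SB n p x lam1 lam2 tau (activeSet n p tau (seq m).2) (seq (m+1)).1 (seq (m+1)).2
        ≤ SB n p x lam1 lam2 tau (activeSet n p tau (seq m).2) z.1 z.2) :
    ∃ mstar : ℕ, ∀ m ≥ mstar,
      Sobj n p x lam1 lam2 tau (seq m).1 (seq m).2
        = Sobj n p x lam1 lam2 tau (seq mstar).1 (seq mstar).2 := by
  classical
  set Bs : ℕ → Finset (PairIdx n) := fun m => activeSet n p tau (seq m).2 with hBs
  set w : ℕ → ℝ := fun m => SB n p x lam1 lam2 tau (Bs m) (seq (m+1)).1 (seq (m+1)).2 with hw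
  set s : ℕ → ℝ := fun m => Sobj n p x lam1 lam2 tau (seq m).1 (seq m).2 with hs
  -- key facts
  have hle1 : ∀ m, s (m+1) ≤ w m := fun m =>
    Sobj_le_SB n p x lam1 lam2 tau hlam2 htau.le (Bs m) _ _
  have hle2 : ∀ m, w m ≤ s m := by
    intro m
    have := hmin m (seq m) (hfeas m)
    have heq : s m = SB n p x lam1 lam2 tau (Bs m) (seq m).1 (seq m).2 :=
      Sobj_eq_SB_active n p x lam1 lam2 tau _ _
    rw [heq]; exact this
  have hanti : ∀ m, w (m+1) ≤ w m := fun m => le_trans (hle2 (m+1)) (hle1 m)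
  have hantitone : Antitone w := antitone_nat_of_succ_le hanti
  -- w factors through Bs
  have key : ∀ m k, Bs m = Bs k → w m = w k := by
    intro m k hmk
    have h1 : w m ≤ w k := by
      have h := hmin m (seq (k+1)) (hfeas (k+1))
      calc w m ≤ SB n p x lam1 lam2 tau (Bs m) (seq (k+1)).1 (seq (k+1)).2 := h
        _ = w k := by simp only [hw]; rw [hmk]
    have h2 : w k ≤ w m := by
      have h := hmin k (seq (m+1)) (hfeas (m+1))
      calc w k ≤ SB n p x lam1 lam2 tau (Bs k) (seq (m+1)).1 (seq (m+1)).2 := h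
        _ = w m := by simp only [hw]; rw [hmk]
    exact le_antisymm h1 h2
  have hfin : (Set.range w).Finite := by
    let h : Finset (PairIdx n) → ℝ := fun b =>
      if hb : ∃ m, Bs m = b then w hb.choose else 0
    have hwh : ∀ m, w m = h (Bs m) := by
      intro m
      have hb : ∃ k, Bs k = Bs m := ⟨m, rfl⟩
      simp only [h, dif_pos hb]
      exact key m hb.choose hb.choose_spec.symm
    have hsub : Set.range w ⊆ Set.range h := by
      rintro r ⟨m, rfl⟩; exact ⟨Bs m, (hwh m).symm⟩
    exact (Set.finite_range h).subset hsub
  -- the minimum of the range of w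
  have hne : hfin.toFinset.Nonempty := ⟨w 0, hfin.mem_toFinset.mpr ⟨0, rfl⟩⟩
  set c := hfin.toFinset.min' hne with hc
  obtain ⟨m₀, hm₀⟩ : ∃ m₀, w m₀ = c := by
    have := hfin.toFinset.min'_mem hne
    rw [hfin.mem_toFinset] at this
    exact this
  have hcle : ∀ m, c ≤ w m := fun m =>
    hfin.toFinset.min'_le _ (hfin.mem_toFinset.mpr ⟨m, rfl⟩)
  have hwc : ∀ m ≥ m₀, w m = c := fun m hm =>
    le_antisymm (hm₀ ▸ hantitone hm) (hcle m)
  refine ⟨m₀ + 1, ?_⟩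
  have hsc : ∀ m ≥ m₀ + 1, s m = c := by
    intro m hm
    obtain ⟨k, rfl⟩ : ∃ k, m = k + 1 := ⟨m - 1, by omega⟩
    have hk : m₀ ≤ k := by omega
    have h1 : s (k+1) ≤ c := (hwc k hk) ▸ hle1 k
    have h2 : c ≤ s (k+1) := le_trans (hcle (k+1)) (hle2 (k+1))
    exact le_antisymm h1 h2
  intro m hm
  have := hsc m hm
  have h2 := hsc (m₀+1) (le_refl _)
  simpa [hs] using this.trans h2.symm
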